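/- Define c : ℝ \ {0} → ℝ by c(s) = -(1 - √(1 + 2|s|))/|s| and extend by c(0) = 1. Then c is continuous at 0, and the one-sided difference quotients satisfy lim_{s→0⁺} (c(s) - 1)/s = -1/2 and lim_{s→0⁻} (c(s) - 1)/s = 1/2; in particular, c is not differentiable at 0. -/
import Mathlib


open Filter Set

/-- The branch c(s) = -(1 - √(1 + 2|s|))/|s| (c(0) = 1) of the characteristic
locus built from the seed curve with curvature κ(s) = -|s|. -/
noncomputable def c16 : ℝ → ℝ :=
  fun s => if s = 0 then 1 else -(1 - Real.sqrt (1 + 2 * |s|)) / |s|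

lemma c16_eq (s : ℝ) : c16 s = 2 / (1 + Real.sqrt (1 + 2 * |s|)) := by
  have h0 : (0:ℝ) ≤ 1 + 2 * |s| := by positivity
  have hs : Real.sqrt (1 + 2 * |s|) ^ 2 = 1 + 2 * |s| := Real.sq_sqrt h0
  have hnn : 0 ≤ Real.sqrt (1 + 2 * |s|) := Real.sqrt_nonneg _
  have hpos : 0 < 1 + Real.sqrt (1 + 2 * |s|) := by linarith
  unfold c16
  by_cases h : s = 0
  · simp [h]
    norm_num
  · have habs : |s| ≠ 0 := abs_ne_zero.mpr h
    rw [if_neg h]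
    field_simp
    nlinarith [hs]

lemma c16_zero : c16 0 = 1 := by simp [c16]

lemma qr_pos (s : ℝ) (hs : 0 < s) :
    (c16 s - 1) / s = -2 / (1 + Real.sqrt (1 + 2 * s)) ^ 2 := by
  have habs : |s| = s := abs_of_pos hs
  rw [c16_eq, habs]
  have h0 : (0:ℝ) ≤ 1 + 2 * s := by linarith
  have hsq : Real.sqrt (1 + 2 * s) ^ 2 = 1 + 2 * s := Real.sq_sqrt h0
  have hnn : 0 ≤ Real.sqrt (1 + 2 * s) := Real.sqrt_nonneg _
  have hpos : 0 < 1 + Real.sqrt (1 + 2 * s) := by linarith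
  field_simp
  nlinarith [hsq]

lemma qr_neg (s : ℝ) (hs : s < 0) :
    (c16 s - 1) / s = 2 / (1 + Real.sqrt (1 - 2 * s)) ^ 2 := by
  have habs : |s| = -s := abs_of_neg hs
  rw [c16_eq, habs]
  have h0 : (0:ℝ) ≤ 1 - 2 * s := by linarith
  have hsq : Real.sqrt (1 - 2 * s) ^ 2 = 1 - 2 * s := Real.sq_sqrt h0
  have hnn : 0 ≤ Real.sqrt (1 - 2 * s) := Real.sqrt_nonneg _
  have hpos : 0 < 1 + Real.sqrt (1 - 2 * s) := by linarith
  have hs' : s ≠ 0 := ne_of_lt hs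
  rw [show 2 * -s = 1 - 2 * s - 1 by ring, show (1:ℝ) + (1 - 2 * s - 1) = 1 - 2 * s by ring]
  field_simp
  nlinarith [hsq]

lemma tendsto_right :
    Tendsto (fun s => (c16 s - 1) / s) (nhdsWithin 0 (Ioi 0)) (nhds (-(1 / 2))) := by
  have h1 : Tendsto (fun s : ℝ => -2 / (1 + Real.sqrt (1 + 2 * s)) ^ 2)
      (nhdsWithin 0 (Ioi 0)) (nhds (-(1 / 2))) := by
    have hc : ContinuousAt (fun s : ℝ => -2 / (1 + Real.sqrt (1 + 2 * s)) ^ 2) 0 := by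
      apply ContinuousAt.div continuousAt_const
      · exact (continuousAt_const.add ((Real.continuous_sqrt.comp (by continuity)).continuousAt)).pow 2
      · norm_num [Real.sqrt_one]
    have := hc.tendsto
    simp only [Real.sqrt_one, mul_zero, add_zero] at this
    norm_num at this
    exact (this.mono_left nhdsWithin_le_nhds)
  refine Tendsto.congr' ?_ h1
  filter_upwards [self_mem_nhdsWithin] with s hs
  exact (qr_pos s hs).symm

lemma tendsto_left :
    Tendsto (fun s => (c16 s - 1) / s) (nhdsWithin 0 (Iio 0)) (nhds (1 / 2)) := by
  have h1 : Tendsto (fun s : ℝ => 2 / (1 + Real.sqrt (1 - 2 * s)) ^ 2)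
      (nhdsWithin 0 (Iio 0)) (nhds (1 / 2)) := by
    have hc : ContinuousAt (fun s : ℝ => 2 / (1 + Real.sqrt (1 - 2 * s)) ^ 2) 0 := by
      apply ContinuousAt.div continuousAt_const
      · exact (continuousAt_const.add ((Real.continuous_sqrt.comp (by continuity)).continuousAt)).pow 2
      · norm_num [Real.sqrt_one]
    have := hc.tendsto
    simp only [Real.sqrt_one, mul_zero, sub_zero] at this
    norm_num at this
    exact (this.mono_left nhdsWithin_le_nhds)
  refine Tendsto.congr' ?_ h1
  filter_upwards [self_mem_nhdsWithin] with s hs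
  exact (qr_neg s hs).symm

/-- c16 is continuous at 0, its one-sided difference quotients tend to -1/2
from the right and 1/2 from the left, and c16 is not differentiable at 0. -/
theorem stmt_16 :
    ContinuousAt c16 0 ∧
    Tendsto (fun s => (c16 s - 1) / s) (nhdsWithin 0 (Ioi 0)) (nhds (-(1 / 2))) ∧
    Tendsto (fun s => (c16 s - 1) / s) (nhdsWithin 0 (Iio 0)) (nhds (1 / 2)) ∧
    ¬ DifferentiableAt ℝ c16 0 := by
  refine ⟨?_, tendsto_right, tendsto_left, ?_⟩
  · have hc : ContinuousAt (fun s : ℝ => 2 / (1 + Real.sqrt (1 + 2 * |s|))) 0 := by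
      apply ContinuousAt.div continuousAt_const
      · exact continuousAt_const.add ((Real.continuous_sqrt.comp (by continuity)).continuousAt)
      · norm_num [Real.sqrt_one]
    have : ContinuousAt c16 0 := by
      apply hc.congr
      filter_upwards with s using (c16_eq s).symm
    exact this
  · intro hdiff
    have hd := hdiff.hasDerivAt
    rw [hasDerivAt_iff_tendsto_slope] at hd
    have hslope : ∀ s : ℝ, slope c16 0 s = (c16 s - 1) / s := by
      intro s
      simp [slope, c16_zero, vsub_eq_sub, div_eq_inv_mul]
    have hR : Tendsto (fun s => (c16 s - 1) / s) (nhdsWithin 0 (Ioi 0))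
        (nhds (deriv c16 0)) := by
      have := hd.mono_left (nhdsWithin_mono 0 (fun x hx => ne_of_gt hx : Ioi (0:ℝ) ⊆ {(0:ℝ)}ᶜ))
      exact this.congr fun s => hslope s
    have hL : Tendsto (fun s => (c16 s - 1) / s) (nhdsWithin 0 (Iio 0))
        (nhds (deriv c16 0)) := by
      have := hd.mono_left (nhdsWithin_mono 0 (fun x hx => ne_of_lt hx : Iio (0:ℝ) ⊆ {(0:ℝ)}ᶜ))
      exact this.congr fun s => hslope s
    have e1 : deriv c16 0 = -(1 / 2) := tendsto_nhds_unique hR tendsto_right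
    have e2 : deriv c16 0 = 1 / 2 := tendsto_nhds_unique hL tendsto_left
    rw [e1] at e2
    norm_num at e2
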